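/- Let n > 1, m > 2, n' > 2 and y ∈ Z_m^{n'}, and let 1 ≤ i ≤ n'-1. If y_i = y_{i+1} then f_{m,n}(y) = f_{m,n}(y_{[1,i]}) + f_{m,n}(y_{[i+1,n']}) - mn + n + 1. If y_i ≠ y_{i+1} then f_{m,n}(y) ≤ f_{m,n}(y_{[1,i]}) + f_{m,n}(y_{[i+1,n']}) and f_{m,n}(y) ≥ f_{m,n}(y_{[1,i]}) + f_{m,n}(y_{[i+1,n']}) + 1 - t(y_{[1,i]})·h(y_{[i+1,n']}). -/

import Mathlib

open Finset

/-- The (0-indexed, inclusive) segment `x_i,…,x_j` is alternating, i.e. of the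
form `abab…` : adjacent symbols differ and the segment has period 2. -/
def IsAltOn {m : ℕ} (x : ℕ → Fin m) (i j : ℕ) : Prop :=
  (∀ k ∈ Finset.Ico i j, x k ≠ x (k + 1)) ∧ ∀ k ∈ Finset.Ico i (j - 1), x k = x (k + 2)

instance {m : ℕ} (x : ℕ → Fin m) (i j : ℕ) : Decidable (IsAltOn x i j) :=
  inferInstanceAs (Decidable (_ ∧ _))

/-- The set of (0-indexed, inclusive) index pairs of maximal alternating segments
of the word `x_0,…,x_{n-1}`. -/
def altSegs {m : ℕ} (n : ℕ) (x : ℕ → Fin m) : Finset (ℕ × ℕ) :=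
  (Finset.range n ×ˢ Finset.range n).filter (fun p => p.1 ≤ p.2 ∧ IsAltOn x p.1 p.2 ∧
    (p.1 = 0 ∨ ¬ IsAltOn x (p.1 - 1) p.2) ∧ (p.2 = n - 1 ∨ ¬ IsAltOn x p.1 (p.2 + 1)))

/-- `a(x)` : the number of maximal alternating segments of `x_0,…,x_{n-1}`. -/
def aCount {m : ℕ} (n : ℕ) (x : ℕ → Fin m) : ℕ := (altSegs n x).card

/-- `∑ s_i` : the sum of the lengths of the maximal alternating segments. -/
def sumLen {m : ℕ} (n : ℕ) (x : ℕ → Fin m) : ℕ := ∑ p ∈ altSegs n x, (p.2 - p.1 + 1)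

/-- `∑ s_i²` : the sum of the squares of the lengths of the maximal alternating segments. -/
def sumLenSq {m : ℕ} (n : ℕ) (x : ℕ → Fin m) : ℕ := ∑ p ∈ altSegs n x, (p.2 - p.1 + 1) ^ 2

/-- `ρ(x)` : the number of runs of the word `x_0,…,x_{n-1}`. -/
def rho {m : ℕ} (n : ℕ) (x : ℕ → Fin m) : ℕ :=
  1 + ((Finset.range (n - 1)).filter (fun i => x i ≠ x (i + 1))).card

/-- `h(x)` : the length of the first maximal alternating segment of `x_0,…,x_{n-1}`. -/
def headAlt {m : ℕ} (n : ℕ) (x : ℕ → Fin m) : ℕ :=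
  ((Finset.range n).filter (fun j => IsAltOn x 0 j)).card

/-- `t(x)` : the length of the last maximal alternating segment of `x_0,…,x_{n-1}`. -/
def tailAlt {m : ℕ} (n : ℕ) (x : ℕ → Fin m) : ℕ :=
  ((Finset.range n).filter (fun j => IsAltOn x (n - 1 - j) (n - 1))).card

/-- Extend a word of length `n` to a function `ℕ → Fin m` (junk value `0` beyond `n`). -/
def extWord {m : ℕ} (n : ℕ) (hm : 0 < m) (y : Fin n → Fin m) : ℕ → Fin m :=
  fun i => if h : i < n then y ⟨i, h⟩ else ⟨0, hm⟩

/-- The FLL ball of radius 1 around `x` : all words `y` of length `n` sharing with `x`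
a common subsequence of length `n - 1` (equivalently, `d_l(x,y) ≤ 1`). -/
def L1ball {m : ℕ} (n : ℕ) (x : Fin n → Fin m) : Set (Fin n → Fin m) :=
  {y | ∃ z : List (Fin m), z.length = n - 1 ∧ z.Sublist (List.ofFn x) ∧ z.Sublist (List.ofFn y)}

/-- `|L_1(x)|` : the size of the FLL ball of radius 1 around `x`. -/
noncomputable def L1size {m : ℕ} (n : ℕ) (x : Fin n → Fin m) : ℕ := (L1ball n x).ncard

/-- `f_n(y)` for binary words `y` of length `len` : `ρ(y)·n - (1/2)∑ s_j²`. -/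
noncomputable def fB (n len : ℕ) (y : ℕ → Fin 2) : ℝ :=
  (rho len y : ℝ) * n - (sumLenSq len y : ℝ) / 2

/-- `f_{m,n}(y)` for words `y` of length `len` over `Z_m` :
`ρ(y)(mn-n-1) - (1/2)∑ s_j² + (3/2)∑ s_j - a(y)`. -/
noncomputable def fM (m n len : ℕ) (y : ℕ → Fin m) : ℝ :=
  (rho len y : ℝ) * ((m : ℝ) * n - n - 1) - (sumLenSq len y : ℝ) / 2
    + 3 / 2 * (sumLen len y : ℝ) - (aCount len y : ℝ)

/-!
Write `f_{m,n}(y) = ρ(y)(mn - n - 1) - ∑ⱼ C(sⱼ - 1, 2)`, using `s²/2 - 3s/2 + 1 = C(s - 1, 2)`.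
Cut `y` between two adjacent positions. The maximal alternating segments of `y` away from the cut
are those of the two halves; near the cut, the last segment of the left half (length `t`) and the
first segment of the right half (length `h`) are replaced by the maximal segments of `y` meeting
the cut. If the two letters at the cut are equal, these are the same two segments and only `ρ`
drops by one. Otherwise `ρ` is additive, and according to whether the period-2 pattern continues
across the cut on each side, the segments meeting it have lengths `t + h`, or `t, h + 1`, or
`t + 1, h`, or `t, 2, h`. Their penalty exceeds `C(t - 1, 2) + C(h - 1, 2)` by `th - 1`, `h - 1`,
`t - 1` or `0`, all of which lie in `[0, th - 1]`.
-/

theorem lt_card_filter_range_iff {n k : ℕ} {r : ℕ → Prop} [DecidablePred r]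
    (hr : ∀ k k', k' ≤ k → r k → r k') (hk : k < n) :
    k < #((range n).filter r) ↔ r k := by
  constructor
  · intro hlt
    by_contra hk'
    have : (range n).filter r ⊆ range k := fun k' hk'' => by
      simp only [mem_filter, mem_range] at hk'' ⊢
      by_contra hle
      exact hk' (hr k' k (by omega) hk''.2)
    have := card_le_card this
    simp only [card_range] at this
    omega
  · intro hrk
    have : range (k + 1) ⊆ (range n).filter r := fun k' hk' => by
      simp only [mem_filter, mem_range] at hk' ⊢
      exact ⟨by omega, hr k k' (by omega) hrk⟩
    have := card_le_card this
    simp only [card_range] at this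
    omega

theorem sum_eq_ite_of_forall_mem_iff {α β : Type*} [AddCommMonoid β] {s : Finset α} {c : Prop}
    [Decidable c] {a : α} (f : α → β) (h : ∀ z, z ∈ s ↔ ¬ c ∧ z = a) :
    ∑ z ∈ s, f z = if c then 0 else f a := by
  split_ifs with hc
  · rw [show s = ∅ by ext z; simp [h, hc], sum_empty]
  · rw [show s = {a} by ext z; simp [h, hc], sum_singleton]

theorem choose_two_add (u v : ℕ) : (u + v).choose 2 = u.choose 2 + v.choose 2 + u * v := by
  induction v with
  | zero => simp
  | succ v ih =>
    rw [← add_assoc, Nat.choose_succ_succ', ih, Nat.choose_succ_succ' v, Nat.choose_one_right,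
      Nat.choose_one_right]
    ring

section Alternating

variable {m : ℕ} {x : ℕ → Fin m}

theorem IsAltOn.mono {p q p' q' : ℕ} (h : IsAltOn x p q) (hp : p ≤ p') (hq : q' ≤ q) :
    IsAltOn x p' q' :=
  ⟨fun k hk => h.1 k (by simp only [mem_Ico] at hk ⊢; omega),
    fun k hk => h.2 k (by simp only [mem_Ico] at hk ⊢; omega)⟩

theorem isAltOn_self (p : ℕ) : IsAltOn x p p :=
  ⟨fun k hk => by simp only [mem_Ico] at hk; omega,
    fun k hk => by simp only [mem_Ico] at hk; omega⟩

theorem isAltOn_succ_iff (p : ℕ) : IsAltOn x p (p + 1) ↔ x p ≠ x (p + 1) := by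
  refine ⟨fun h => h.1 p (by simp), fun h => ⟨fun k hk => ?_, fun k hk => ?_⟩⟩ <;>
    simp only [mem_Ico] at hk
  · rwa [show k = p by omega]
  · omega

theorem IsAltOn.ne {p q k : ℕ} (h : IsAltOn x p q) (hpk : p ≤ k) (hkq : k < q) :
    x k ≠ x (k + 1) :=
  h.1 k (by simp only [mem_Ico]; omega)

theorem IsAltOn.glue {a b c d : ℕ} (h₁ : IsAltOn x a b) (h₂ : IsAltOn x c d) (hac : a ≤ c)
    (hcb : c < b) : IsAltOn x a d := by
  refine ⟨fun k hk => ?_, fun k hk => ?_⟩ <;> simp only [mem_Ico] at hk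
  · rcases lt_or_ge k b with hkb | hkb
    · exact h₁.1 k (by simp only [mem_Ico]; omega)
    · exact h₂.1 k (by simp only [mem_Ico]; omega)
  · rcases lt_or_ge k (b - 1) with hkb | hkb
    · exact h₁.2 k (by simp only [mem_Ico]; omega)
    · exact h₂.2 k (by simp only [mem_Ico]; omega)

theorem isAltOn_shift_iff (i a b : ℕ) :
    IsAltOn (fun k => x (k + i)) a b ↔ IsAltOn x (a + i) (b + i) := by
  constructor
  · rintro ⟨h₁, h₂⟩
    refine ⟨fun k hk => ?_, fun k hk => ?_⟩ <;> simp only [mem_Ico] at hk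
    · simpa only [show k - i + i = k by omega, show k - i + 1 + i = k + 1 by omega] using
        h₁ (k - i) (by simp only [mem_Ico]; omega)
    · simpa only [show k - i + i = k by omega, show k - i + 2 + i = k + 2 by omega] using
        h₂ (k - i) (by simp only [mem_Ico]; omega)
  · rintro ⟨h₁, h₂⟩
    refine ⟨fun k hk => ?_, fun k hk => ?_⟩ <;> simp only [mem_Ico] at hk
    · simpa only [add_right_comm k 1 i] using h₁ (k + i) (by simp only [mem_Ico]; omega)
    · simpa only [add_right_comm k 2 i] using h₂ (k + i) (by simp only [mem_Ico]; omega)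

end Alternating

section MaximalSegments

variable {m N : ℕ} {x : ℕ → Fin m}

theorem mem_altSegs {p q : ℕ} :
    (p, q) ∈ altSegs N x ↔ p ≤ q ∧ q < N ∧ IsAltOn x p q ∧
      (p = 0 ∨ ¬ IsAltOn x (p - 1) q) ∧ (q = N - 1 ∨ ¬ IsAltOn x p (q + 1)) := by
  simp only [altSegs, mem_filter, mem_product, mem_range]
  constructor
  · rintro ⟨⟨-, hq⟩, hpq, h⟩
    exact ⟨hpq, hq, h⟩
  · rintro ⟨hpq, hq, h⟩
    exact ⟨⟨by omega, hq⟩, hpq, h⟩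

theorem mem_altSegs_iff_eq_start {P p q : ℕ} (hqN : q < N)
    (hP : ∀ p ≤ q, IsAltOn x p q ↔ P ≤ p) (hp : p ≤ q) :
    (p, q) ∈ altSegs N x ↔ p = P ∧ (q = N - 1 ∨ ¬ IsAltOn x P (q + 1)) := by
  have hPq : P ≤ q := (hP q le_rfl).1 (isAltOn_self q)
  rw [mem_altSegs]
  constructor
  · rintro ⟨-, -, halt, hl, hr⟩
    have hPp := (hP p hp).1 halt
    have hpP : p = P := by
      rcases hl with hl | hl
      · omega
      · by_contra hne
        exact hl ((hP (p - 1) (by omega)).2 (by omega))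
    exact ⟨hpP, hpP ▸ hr⟩
  · rintro ⟨rfl, hr⟩
    refine ⟨hp, hqN, (hP p hp).2 le_rfl, ?_, hr⟩
    by_cases hp0 : p = 0
    · exact Or.inl hp0
    · exact Or.inr fun h => by have := (hP (p - 1) (by omega)).1 h; omega

theorem mem_altSegs_iff_eq_stop {Q p q : ℕ} (hQN : Q < N)
    (hQ : ∀ q, p ≤ q → q < N → (IsAltOn x p q ↔ q ≤ Q)) (hpq : p ≤ q) (hqN : q < N) :
    (p, q) ∈ altSegs N x ↔ q = Q ∧ (p = 0 ∨ ¬ IsAltOn x (p - 1) Q) := by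
  have hpQ : p ≤ Q := (hQ p le_rfl (by omega)).1 (isAltOn_self p)
  rw [mem_altSegs]
  constructor
  · rintro ⟨-, -, halt, hl, hr⟩
    have hqQ := (hQ q hpq hqN).1 halt
    have hqQ' : q = Q := by
      rcases hr with hr | hr
      · omega
      · by_contra hne
        exact hr ((hQ (q + 1) (by omega) (by omega)).2 (by omega))
    exact ⟨hqQ', hqQ' ▸ hl⟩
  · rintro ⟨rfl, hl⟩
    refine ⟨hpq, hqN, (hQ q hpq hqN).2 le_rfl, hl, ?_⟩
    by_cases hqN' : q = N - 1
    · exact Or.inl hqN'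
    · exact Or.inr fun h => by have := (hQ (q + 1) (by omega) (by omega)).1 h; omega

theorem mem_altSegs_iff_eq_corner {a b p₀ q₀ p q : ℕ} {c : Prop} (hab : a ≤ b)
    (hq₀N : q₀ < N)
    (hbox : ∀ p ≤ a, ∀ q, b ≤ q → q < N → (IsAltOn x p q ↔ c ∧ p₀ ≤ p ∧ q ≤ q₀))
    (hp : p ≤ a) (hq : b ≤ q) :
    (p, q) ∈ altSegs N x ↔ c ∧ p = p₀ ∧ q = q₀ := by
  rw [mem_altSegs]
  constructor
  · rintro ⟨-, hqN, halt, hl, hr⟩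
    obtain ⟨hc, hp₀, hq₀⟩ := (hbox p hp q hq hqN).1 halt
    refine ⟨hc, ?_, ?_⟩
    · rcases hl with hl | hl
      · omega
      · by_contra hne
        exact hl ((hbox (p - 1) (by omega) q hq hqN).2 ⟨hc, by omega, hq₀⟩)
    · rcases hr with hr | hr
      · omega
      · by_contra hne
        exact hr ((hbox p hp (q + 1) (by omega) (by omega)).2 ⟨hc, hp₀, by omega⟩)
  · rintro ⟨hc, rfl, rfl⟩
    refine ⟨by omega, hq₀N, (hbox p hp q hq hq₀N).2 ⟨hc, le_rfl, le_rfl⟩, ?_, ?_⟩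
    · by_cases hp0 : p = 0
      · exact Or.inl hp0
      · exact Or.inr fun h => by
          have := ((hbox (p - 1) (by omega) q hq hq₀N).1 h).2.1; omega
    · by_cases hqN : q = N - 1
      · exact Or.inl hqN
      · exact Or.inr fun h => by
          have := ((hbox p hp (q + 1) (by omega) (by omega)).1 h).2.2; omega

end MaximalSegments

section TailHead

variable {m : ℕ} {x : ℕ → Fin m}

theorem isAltOn_iff_sub_tailAlt_le {j p : ℕ} (hp : p ≤ j) :
    IsAltOn x p j ↔ j + 1 - tailAlt (j + 1) x ≤ p := by
  have h := lt_card_filter_range_iff (n := j + 1) (k := j - p) (r := fun k => IsAltOn x (j - k) j)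
    (fun _ _ hk hr => hr.mono (by omega) le_rfl) (by omega)
  simp only [show j - (j - p) = p by omega] at h
  unfold tailAlt
  simp only [Nat.add_sub_cancel]
  rw [← h]
  omega

theorem isAltOn_iff_lt_headAlt {N q : ℕ} (hq : q < N) :
    IsAltOn x 0 q ↔ q < headAlt N x :=
  (lt_card_filter_range_iff (fun _ _ hk h => h.mono le_rfl hk) hq).symm

theorem tailAlt_le (N : ℕ) (x : ℕ → Fin m) : tailAlt N x ≤ N :=
  (card_filter_le _ _).trans (card_range N).le

theorem headAlt_le (N : ℕ) (x : ℕ → Fin m) : headAlt N x ≤ N :=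
  (card_filter_le _ _).trans (card_range N).le

end TailHead

section Sums

variable {m N : ℕ} {x : ℕ → Fin m} {β : Type*} [AddCommMonoid β]

theorem filter_altSegs_snd_lt {j : ℕ} (hjN : j + 1 ≤ N) :
    (altSegs N x).filter (fun s => s.2 < j) = (altSegs (j + 1) x).filter (fun s => s.2 < j) := by
  ext ⟨p, q⟩
  simp only [mem_filter, mem_altSegs]
  constructor <;> rintro ⟨⟨hpq, -, halt, hl, hr⟩, hqj⟩ <;>
    exact ⟨⟨hpq, by omega, halt, hl, hr.imp (fun _ => by omega) id⟩, hqj⟩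

theorem mem_altSegs_shift_iff {i p q : ℕ} (hp : 0 < p) :
    (p + i, q + i) ∈ altSegs N x ↔ (p, q) ∈ altSegs (N - i) (fun k => x (k + i)) := by
  rw [mem_altSegs, mem_altSegs, isAltOn_shift_iff, isAltOn_shift_iff, isAltOn_shift_iff,
    show p - 1 + i = p + i - 1 by omega, add_right_comm q 1 i]
  constructor <;> rintro ⟨hpq, hqN, halt, hl, hr⟩ <;>
    exact ⟨by omega, by omega, halt, hl.imp (fun _ => by omega) id,
      hr.imp (fun _ => by omega) id⟩

theorem sum_filter_altSegs_fst_gt (g : ℕ → β) (i : ℕ) :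
    ∑ s ∈ (altSegs N x).filter (fun s => i < s.1), g (s.2 - s.1)
      = ∑ s ∈ (altSegs (N - i) (fun k => x (k + i))).filter (fun s => 0 < s.1),
          g (s.2 - s.1) := by
  refine sum_nbij' (fun s => (s.1 - i, s.2 - i)) (fun s => (s.1 + i, s.2 + i)) ?_ ?_ ?_ ?_ ?_ <;>
    rintro ⟨p, q⟩ hmem <;> simp only [mem_filter] at hmem <;> have := (mem_altSegs.1 hmem.1).1
  · refine mem_filter.2 ⟨(mem_altSegs_shift_iff (by omega)).1 ?_, by omega⟩
    rw [Nat.sub_add_cancel (by omega), Nat.sub_add_cancel (by omega)]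
    exact hmem.1
  · exact mem_filter.2 ⟨(mem_altSegs_shift_iff hmem.2).2 hmem.1, by omega⟩
  · simp only [Prod.mk.injEq]
    omega
  · simp only [Prod.mk.injEq]
    omega
  · congr 1
    omega

theorem sum_altSegs_eq_add_last (g : ℕ → β) {j P : ℕ}
    (hP : ∀ p ≤ j, IsAltOn x p j ↔ P ≤ p) :
    ∑ s ∈ altSegs (j + 1) x, g (s.2 - s.1)
      = ∑ s ∈ (altSegs (j + 1) x).filter (fun s => s.2 < j), g (s.2 - s.1) + g (j - P) := by
  have hlast : (altSegs (j + 1) x).filter (fun s => ¬ s.2 < j) = {(P, j)} := by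
    ext ⟨p, q⟩
    simp only [mem_filter, mem_singleton, Prod.mk.injEq, not_lt]
    constructor
    · rintro ⟨hmem, hjq⟩
      obtain ⟨hpq, hqj, -⟩ := mem_altSegs.1 hmem
      obtain rfl : q = j := by omega
      exact ⟨((mem_altSegs_iff_eq_start (by omega) hP hpq).1 hmem).1, rfl⟩
    · rintro ⟨rfl, rfl⟩
      have hPj : p ≤ q := (hP q le_rfl).1 (isAltOn_self q)
      exact ⟨(mem_altSegs_iff_eq_start (by omega) hP hPj).2 ⟨rfl, Or.inl rfl⟩, le_rfl⟩
  rw [← sum_filter_add_sum_filter_not _ (fun s : ℕ × ℕ => s.2 < j), hlast, sum_singleton]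

theorem sum_altSegs_eq_add_first (g : ℕ → β) {Q : ℕ} (hQN : Q < N)
    (hQ : ∀ q < N, IsAltOn x 0 q ↔ q ≤ Q) :
    ∑ s ∈ altSegs N x, g (s.2 - s.1)
      = ∑ s ∈ (altSegs N x).filter (fun s => 0 < s.1), g (s.2 - s.1) + g Q := by
  have hQ' : ∀ q, 0 ≤ q → q < N → (IsAltOn x 0 q ↔ q ≤ Q) := fun q _ => hQ q
  have hfirst : (altSegs N x).filter (fun s => ¬ 0 < s.1) = {(0, Q)} := by
    ext ⟨p, q⟩
    simp only [mem_filter, mem_singleton, Prod.mk.injEq, not_lt, nonpos_iff_eq_zero]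
    constructor
    · rintro ⟨hmem, rfl⟩
      obtain ⟨hpq, hqN, -⟩ := mem_altSegs.1 hmem
      exact ⟨rfl, ((mem_altSegs_iff_eq_stop hQN hQ' hpq hqN).1 hmem).1⟩
    · rintro ⟨rfl, rfl⟩
      exact ⟨(mem_altSegs_iff_eq_stop hQN hQ' (Nat.zero_le _) hQN).2 ⟨rfl, Or.inl rfl⟩, rfl⟩
  rw [← sum_filter_add_sum_filter_not _ (fun s : ℕ × ℕ => 0 < s.1), hfirst, sum_singleton,
    Nat.sub_zero]

end Sums

def altPenalty {m : ℕ} (N : ℕ) (x : ℕ → Fin m) : ℕ :=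
  ∑ s ∈ altSegs N x, (s.2 - s.1).choose 2

theorem fM_eq (m n N : ℕ) (x : ℕ → Fin m) :
    fM m n N x = rho N x * ((m : ℝ) * n - n - 1) - altPenalty N x := by
  have h : ∀ d : ℕ,
      ((d.choose 2 : ℕ) : ℝ) = ((d : ℝ) + 1) ^ 2 / 2 - 3 / 2 * ((d : ℝ) + 1) + 1 := by
    intro d
    rw [Nat.cast_choose_two]
    ring
  rw [fM, altPenalty, sumLenSq, sumLen, aCount, card_eq_sum_ones]
  push_cast
  simp only [h, sum_add_distrib, sum_sub_distrib, ← sum_div, ← mul_sum]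
  ring

theorem rho_add_one_eq {m N j : ℕ} (x : ℕ → Fin m) (hjN : j + 1 < N) :
    rho N x + 1 = rho (j + 1) x + rho (N - (j + 1)) (fun k => x (k + (j + 1)))
      + if x j = x (j + 1) then 0 else 1 := by
  obtain ⟨r, rfl⟩ : ∃ r, N = j + 1 + (r + 1) := ⟨N - (j + 2), by omega⟩
  simp only [rho, card_filter, Nat.add_sub_cancel, Nat.add_sub_cancel_left,
    show j + 1 + (r + 1) - 1 = j + (r + 1) by omega, sum_range_add, sum_range_succ', add_zero]
  have hshift : ∑ k ∈ range r, (if x (j + (k + 1)) ≠ x (j + (k + 1) + 1) then 1 else 0)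
      = ∑ k ∈ range r, if x (k + (j + 1)) ≠ x (k + 1 + (j + 1)) then 1 else 0 :=
    sum_congr rfl fun k _ => by
      rw [show j + (k + 1) = k + (j + 1) by omega, show k + (j + 1) + 1 = k + 1 + (j + 1) by omega]
  rw [hshift]
  split_ifs <;> omega

section Cut

/- The word is cut between positions `j` and `j + 1`; `hP` and `hQ` say that the last maximal
alternating segment of `x_0 … x_j` starts at `P` and the first one of `x_{j+1} … x_{N-1}` ends at
`Q`. -/
variable {m N j P Q : ℕ} {x : ℕ → Fin m} {β : Type*} [AddCommMonoid β]

theorem isAltOn_ending_after_cut_iff (hP : ∀ p ≤ j, IsAltOn x p j ↔ P ≤ p) {p : ℕ}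
    (hp : p ≤ j) :
    IsAltOn x p (j + 1) ↔ x j ≠ x (j + 1) ∧ (if IsAltOn x P (j + 1) then P else j) ≤ p := by
  constructor
  · intro h
    refine ⟨h.ne hp (by omega), ?_⟩
    have hPp : P ≤ p := (hP p hp).1 (h.mono le_rfl (by omega))
    split_ifs with hA
    · exact hPp
    · by_contra hpj
      exact hA (((hP P (hPp.trans hp)).2 le_rfl).glue h hPp (by omega))
  · rintro ⟨hne, hle⟩
    split_ifs at hle with hA
    · exact hA.mono hle le_rfl
    · rw [show p = j by omega]
      exact (isAltOn_succ_iff j).2 hne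

theorem isAltOn_starting_before_cut_iff
    (hQ : ∀ q, j + 1 ≤ q → q < N → (IsAltOn x (j + 1) q ↔ q ≤ Q)) (hQN : Q < N)
    {q : ℕ} (hq : j + 1 ≤ q) (hqN : q < N) :
    IsAltOn x j q ↔ x j ≠ x (j + 1) ∧ q ≤ (if IsAltOn x j Q then Q else j + 1) := by
  constructor
  · intro h
    refine ⟨h.ne le_rfl (by omega), ?_⟩
    have hqQ : q ≤ Q := (hQ q hq hqN).1 (h.mono (by omega) le_rfl)
    split_ifs with hB
    · exact hqQ
    · by_contra hqj
      exact hB (h.glue ((hQ Q (hq.trans hqQ) hQN).2 le_rfl) (by omega) (by omega))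
  · rintro ⟨hne, hle⟩
    split_ifs at hle with hB
    · exact hB.mono le_rfl hle
    · rw [show q = j + 1 by omega]
      exact (isAltOn_succ_iff j).2 hne

theorem isAltOn_across_cut_iff {p q : ℕ} (hp : p ≤ j) (hq : j + 1 ≤ q) :
    IsAltOn x p q ↔ IsAltOn x p (j + 1) ∧ IsAltOn x j q :=
  ⟨fun h => ⟨h.mono le_rfl hq, h.mono hp le_rfl⟩,
    fun ⟨h₁, h₂⟩ => h₁.glue h₂ hp (Nat.lt_succ_self j)⟩

theorem mem_altSegs_end_at_cut_iff (hjN : j + 1 < N) (hP : ∀ p ≤ j, IsAltOn x p j ↔ P ≤ p)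
    {p : ℕ} (hp : p ≤ j) :
    (p, j) ∈ altSegs N x ↔ ¬ IsAltOn x P (j + 1) ∧ p = P := by
  rw [mem_altSegs_iff_eq_start (by omega) hP hp, and_comm]
  exact and_congr_left fun _ => or_iff_right (by omega)

theorem mem_altSegs_start_at_cut_iff
    (hQ : ∀ q, j + 1 ≤ q → q < N → (IsAltOn x (j + 1) q ↔ q ≤ Q)) (hQN : Q < N)
    {q : ℕ} (hq : j + 1 ≤ q) (hqN : q < N) :
    (j + 1, q) ∈ altSegs N x ↔ ¬ IsAltOn x j Q ∧ q = Q := by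
  rw [mem_altSegs_iff_eq_stop hQN hQ hq hqN, and_comm, Nat.add_sub_cancel]
  exact and_congr_left fun _ => or_iff_right (by omega)

theorem mem_altSegs_across_cut_iff (hjN : j + 1 < N) (hP : ∀ p ≤ j, IsAltOn x p j ↔ P ≤ p)
    (hQ : ∀ q, j + 1 ≤ q → q < N → (IsAltOn x (j + 1) q ↔ q ≤ Q)) (hQN : Q < N)
    {p q : ℕ} (hp : p ≤ j) (hq : j + 1 ≤ q) :
    (p, q) ∈ altSegs N x ↔ x j ≠ x (j + 1) ∧ p = (if IsAltOn x P (j + 1) then P else j) ∧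
      q = (if IsAltOn x j Q then Q else j + 1) := by
  refine mem_altSegs_iff_eq_corner (Nat.le_succ j) (by split_ifs <;> omega)
    (fun p hp q hq hqN => ?_) hp hq
  rw [isAltOn_across_cut_iff hp hq, isAltOn_ending_after_cut_iff hP hp,
    isAltOn_starting_before_cut_iff hQ hQN hq hqN]
  tauto

theorem sum_near_cut_eq_ite (g : ℕ → β) (hjN : j + 1 < N)
    (hP : ∀ p ≤ j, IsAltOn x p j ↔ P ≤ p)
    (hQ : ∀ q, j + 1 ≤ q → q < N → (IsAltOn x (j + 1) q ↔ q ≤ Q)) (hQN : Q < N) :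
    ∑ s ∈ (altSegs N x).filter (fun s => s.1 ≤ j + 1 ∧ j ≤ s.2), g (s.2 - s.1)
      = (if IsAltOn x P (j + 1) then 0 else g (j - P))
        + (if IsAltOn x j Q then 0 else g (Q - (j + 1)))
        + (if x j = x (j + 1) then 0 else
            g ((if IsAltOn x j Q then Q else j + 1) - (if IsAltOn x P (j + 1) then P else j))) := by
  have hPj : P ≤ j := (hP j le_rfl).1 (isAltOn_self j)
  have hjQ : j + 1 ≤ Q := (hQ (j + 1) le_rfl (by omega)).1 (isAltOn_self _)
  rw [← sum_filter_add_sum_filter_not _ (fun s : ℕ × ℕ => s.2 = j),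
    ← sum_filter_add_sum_filter_not (filter (fun s : ℕ × ℕ => ¬ s.2 = j) _)
      (fun s : ℕ × ℕ => s.1 = j + 1), ← add_assoc]
  refine congr_arg₂ _ (congr_arg₂ _ ?_ ?_) ?_
  · refine sum_eq_ite_of_forall_mem_iff (a := (P, j)) (fun s : ℕ × ℕ => g (s.2 - s.1))
      fun ⟨p, q⟩ => ?_
    simp only [mem_filter, Prod.mk.injEq]
    constructor
    · rintro ⟨⟨hmem, -⟩, rfl⟩
      obtain ⟨hA, rfl⟩ := (mem_altSegs_end_at_cut_iff hjN hP (mem_altSegs.1 hmem).1).1 hmem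
      exact ⟨hA, rfl, rfl⟩
    · rintro ⟨hA, rfl, rfl⟩
      exact ⟨⟨(mem_altSegs_end_at_cut_iff hjN hP hPj).2 ⟨hA, rfl⟩, by omega, le_rfl⟩,
        rfl⟩
  · refine sum_eq_ite_of_forall_mem_iff (a := (j + 1, Q)) (fun s : ℕ × ℕ => g (s.2 - s.1))
      fun ⟨p, q⟩ => ?_
    simp only [mem_filter, Prod.mk.injEq]
    constructor
    · rintro ⟨⟨⟨hmem, -⟩, -⟩, rfl⟩
      obtain ⟨hpq, hqN, -⟩ := mem_altSegs.1 hmem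
      obtain ⟨hB, rfl⟩ := (mem_altSegs_start_at_cut_iff hQ hQN hpq hqN).1 hmem
      exact ⟨hB, rfl, rfl⟩
    · rintro ⟨hB, rfl, rfl⟩
      exact ⟨⟨⟨(mem_altSegs_start_at_cut_iff hQ hQN hjQ hQN).2 ⟨hB, rfl⟩, by omega,
        by omega⟩, by omega⟩, rfl⟩
  · refine sum_eq_ite_of_forall_mem_iff
      (a := ((if IsAltOn x P (j + 1) then P else j), (if IsAltOn x j Q then Q else j + 1)))
      (fun s : ℕ × ℕ => g (s.2 - s.1)) fun ⟨p, q⟩ => ?_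
    simp only [mem_filter, Prod.mk.injEq]
    constructor
    · rintro ⟨⟨⟨hmem, hpj, hjq⟩, hqj⟩, hpj'⟩
      obtain ⟨hpq, -⟩ := mem_altSegs.1 hmem
      exact (mem_altSegs_across_cut_iff hjN hP hQ hQN (by omega) (by omega)).1 hmem
    · rintro ⟨hne, rfl, rfl⟩
      have hp₀ : (if IsAltOn x P (j + 1) then P else j) ≤ j := by split_ifs <;> omega
      have hq₀ : j + 1 ≤ (if IsAltOn x j Q then Q else j + 1) := by split_ifs <;> omega
      exact ⟨⟨⟨(mem_altSegs_across_cut_iff hjN hP hQ hQN hp₀ hq₀).2 ⟨hne, rfl, rfl⟩,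
        by omega, by omega⟩, by omega⟩, by omega⟩

theorem sum_near_cut_of_eq (g : ℕ → β) (he : x j = x (j + 1))
    (hjN : j + 1 < N) (hP : ∀ p ≤ j, IsAltOn x p j ↔ P ≤ p)
    (hQ : ∀ q, j + 1 ≤ q → q < N → (IsAltOn x (j + 1) q ↔ q ≤ Q)) (hQN : Q < N) :
    ∑ s ∈ (altSegs N x).filter (fun s => s.1 ≤ j + 1 ∧ j ≤ s.2), g (s.2 - s.1)
      = g (j - P) + g (Q - (j + 1)) := by
  have hPj : P ≤ j := (hP j le_rfl).1 (isAltOn_self j)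
  have hjQ : j + 1 ≤ Q := (hQ (j + 1) le_rfl (by omega)).1 (isAltOn_self _)
  rw [sum_near_cut_eq_ite g hjN hP hQ hQN, if_neg fun h => h.ne hPj (Nat.lt_succ_self j) he,
    if_neg fun h => h.ne le_rfl hjQ he, if_pos he, add_zero]

theorem sum_near_cut_bounds_of_ne (hne : x j ≠ x (j + 1)) (hjN : j + 1 < N)
    (hP : ∀ p ≤ j, IsAltOn x p j ↔ P ≤ p)
    (hQ : ∀ q, j + 1 ≤ q → q < N → (IsAltOn x (j + 1) q ↔ q ≤ Q)) (hQN : Q < N) :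
    (j - P).choose 2 + (Q - (j + 1)).choose 2
        ≤ ∑ s ∈ (altSegs N x).filter (fun s => s.1 ≤ j + 1 ∧ j ≤ s.2),
            (s.2 - s.1).choose 2 ∧
      ∑ s ∈ (altSegs N x).filter (fun s => s.1 ≤ j + 1 ∧ j ≤ s.2), (s.2 - s.1).choose 2 + 1
        ≤ (j - P).choose 2 + (Q - (j + 1)).choose 2 + (j + 1 - P) * (Q - j) := by
  have hPj : P ≤ j := (hP j le_rfl).1 (isAltOn_self j)
  have hjQ : j + 1 ≤ Q := (hQ (j + 1) le_rfl (by omega)).1 (isAltOn_self _)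
  rw [sum_near_cut_eq_ite (fun d => d.choose 2) hjN hP hQ hQN, if_neg hne]
  obtain ⟨u, rfl⟩ : ∃ u, j = P + u := ⟨j - P, by omega⟩
  obtain ⟨v, rfl⟩ : ∃ v, Q = P + u + 1 + v := ⟨Q - (P + u + 1), by omega⟩
  have h1 : (1 : ℕ).choose 2 = 0 := rfl
  split_ifs <;>
    simp only [show P + u - P = u by omega, show P + u + 1 + v - (P + u + 1) = v by omega,
      show P + u + 1 - P = u + 1 by omega, show P + u + 1 + v - (P + u) = v + 1 by omega,
      show P + u + 1 + v - P = u + (v + 1) by omega, show P + u + 1 - (P + u) = 1 by omega,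
      choose_two_add, h1] <;>
    constructor <;> nlinarith

theorem sum_altSegs_split (g : ℕ → β) (hjN : j + 1 < N)
    (hP : ∀ p ≤ j, IsAltOn x p j ↔ P ≤ p)
    (hQ : ∀ q, j + 1 ≤ q → q < N → (IsAltOn x (j + 1) q ↔ q ≤ Q)) (hQN : Q < N) :
    ∑ s ∈ altSegs N x, g (s.2 - s.1) + g (j - P) + g (Q - (j + 1))
      = ∑ s ∈ altSegs (j + 1) x, g (s.2 - s.1)
        + ∑ s ∈ altSegs (N - (j + 1)) (fun k => x (k + (j + 1))), g (s.2 - s.1)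
        + ∑ s ∈ (altSegs N x).filter (fun s => s.1 ≤ j + 1 ∧ j ≤ s.2), g (s.2 - s.1) := by
  have hjQ : j + 1 ≤ Q := (hQ (j + 1) le_rfl (by omega)).1 (isAltOn_self _)
  have hQ' : ∀ q < N - (j + 1), IsAltOn (fun k => x (k + (j + 1))) 0 q ↔ q ≤ Q - (j + 1) := by
    intro q hq
    rw [isAltOn_shift_iff, zero_add, hQ _ (by omega) (by omega)]
    omega
  have hwhole : ∑ s ∈ altSegs N x, g (s.2 - s.1)
      = ∑ s ∈ (altSegs N x).filter (fun s => s.2 < j), g (s.2 - s.1)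
        + ∑ s ∈ (altSegs N x).filter (fun s => j + 1 < s.1), g (s.2 - s.1)
        + ∑ s ∈ (altSegs N x).filter (fun s => s.1 ≤ j + 1 ∧ j ≤ s.2), g (s.2 - s.1) := by
    rw [← sum_filter_add_sum_filter_not _ (fun s : ℕ × ℕ => s.2 < j),
      ← sum_filter_add_sum_filter_not (filter (fun s : ℕ × ℕ => ¬ s.2 < j) _)
        (fun s : ℕ × ℕ => j + 1 < s.1), filter_filter, filter_filter, add_assoc]
    congr 2 <;> refine sum_congr (filter_congr fun ⟨p, q⟩ hmem => ?_) fun _ _ => rfl <;>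
      have := (mem_altSegs.1 hmem).1 <;> omega
  rw [hwhole, filter_altSegs_snd_lt hjN.le, sum_filter_altSegs_fst_gt,
    sum_altSegs_eq_add_last g hP, sum_altSegs_eq_add_first g (by omega) hQ']
  abel

theorem altPenalty_split_of_eq (he : x j = x (j + 1)) (hjN : j + 1 < N)
    (hP : ∀ p ≤ j, IsAltOn x p j ↔ P ≤ p)
    (hQ : ∀ q, j + 1 ≤ q → q < N → (IsAltOn x (j + 1) q ↔ q ≤ Q)) (hQN : Q < N) :
    altPenalty N x
      = altPenalty (j + 1) x + altPenalty (N - (j + 1)) (fun k => x (k + (j + 1))) := by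
  have h := sum_altSegs_split (fun d => d.choose 2) hjN hP hQ hQN
  rw [sum_near_cut_of_eq (fun d => d.choose 2) he hjN hP hQ hQN] at h
  unfold altPenalty
  omega

theorem altPenalty_split_of_ne (hne : x j ≠ x (j + 1)) (hjN : j + 1 < N)
    (hP : ∀ p ≤ j, IsAltOn x p j ↔ P ≤ p)
    (hQ : ∀ q, j + 1 ≤ q → q < N → (IsAltOn x (j + 1) q ↔ q ≤ Q)) (hQN : Q < N) :
    altPenalty (j + 1) x + altPenalty (N - (j + 1)) (fun k => x (k + (j + 1)))
        ≤ altPenalty N x ∧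
      altPenalty N x + 1 ≤ altPenalty (j + 1) x
        + altPenalty (N - (j + 1)) (fun k => x (k + (j + 1))) + (j + 1 - P) * (Q - j) := by
  have h := sum_altSegs_split (fun d => d.choose 2) hjN hP hQ hQN
  have hM := sum_near_cut_bounds_of_ne hne hjN hP hQ hQN
  unfold altPenalty
  omega

end Cut

theorem fM_split {m : ℕ} (x : ℕ → Fin m) (n : ℕ) {N j : ℕ} (hjN : j + 1 < N) :
    (x j = x (j + 1) →
      fM m n N x = fM m n (j + 1) x + fM m n (N - (j + 1)) (fun k => x (k + (j + 1)))
        - (m : ℝ) * n + n + 1)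
    ∧ (x j ≠ x (j + 1) →
      fM m n N x ≤ fM m n (j + 1) x + fM m n (N - (j + 1)) (fun k => x (k + (j + 1)))
      ∧ fM m n N x ≥ fM m n (j + 1) x + fM m n (N - (j + 1)) (fun k => x (k + (j + 1))) + 1
          - (tailAlt (j + 1) x : ℝ)
            * (headAlt (N - (j + 1)) (fun k => x (k + (j + 1))) : ℝ)) := by
  set T := tailAlt (j + 1) x
  set H := headAlt (N - (j + 1)) (fun k => x (k + (j + 1)))
  have hP : ∀ p ≤ j, IsAltOn x p j ↔ j + 1 - T ≤ p := fun _ => isAltOn_iff_sub_tailAlt_le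
  have hQ : ∀ q, j + 1 ≤ q → q < N → (IsAltOn x (j + 1) q ↔ q ≤ j + H) := by
    intro q hq hqN
    have h := isAltOn_iff_lt_headAlt (x := fun k => x (k + (j + 1))) (q := q - (j + 1))
      (N := N - (j + 1)) (by omega)
    rw [isAltOn_shift_iff, zero_add, Nat.sub_add_cancel hq] at h
    rw [h]
    omega
  have hQN : j + H < N := by have := headAlt_le (N - (j + 1)) (fun k => x (k + (j + 1))); omega
  have hρ := rho_add_one_eq x hjN
  rw [fM_eq, fM_eq, fM_eq]
  constructor
  · intro he
    rw [if_pos he] at hρ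
    have hr : (rho N x : ℝ) + 1
        = rho (j + 1) x + rho (N - (j + 1)) (fun k => x (k + (j + 1))) := by
      exact_mod_cast hρ
    rw [altPenalty_split_of_eq he hjN hP hQ hQN, Nat.cast_add]
    linear_combination ((m : ℝ) * n - n - 1) * hr
  · intro hne
    rw [if_neg hne] at hρ
    have hr : (rho N x : ℝ) = rho (j + 1) x + rho (N - (j + 1)) (fun k => x (k + (j + 1))) := by
      exact_mod_cast (by omega)
    obtain ⟨hlo, hhi⟩ := altPenalty_split_of_ne hne hjN hP hQ hQN
    rw [show j + 1 - (j + 1 - T) = T by have := tailAlt_le (j + 1) x; omega,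
      show j + H - j = H by omega] at hhi
    have hlo' := (Nat.cast_le (α := ℝ)).2 hlo
    have hhi' := (Nat.cast_le (α := ℝ)).2 hhi
    push_cast at hlo' hhi'
    rw [hr]
    constructor <;> linarith

/-- Splitting bounds for `f_{m,n}`: for `y ∈ Z_m^{n'}` with `n > 1`, `m > 2`, `n' > 2`, and
`1 ≤ i ≤ n'-1`: if `y_i = y_{i+1}` then
`f_{m,n}(y) = f_{m,n}(y_{[1,i]}) + f_{m,n}(y_{[i+1,n']}) - mn + n + 1`; if `y_i ≠ y_{i+1}`
then `f_{m,n}(y) ≤ f_{m,n}(y_{[1,i]}) + f_{m,n}(y_{[i+1,n']})` and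
`f_{m,n}(y) ≥ f_{m,n}(y_{[1,i]}) + f_{m,n}(y_{[i+1,n']}) + 1 - t(y_{[1,i]})·h(y_{[i+1,n']})`. -/
theorem stmt14 (n m n' : ℕ) (hm : 2 < m) (y : Fin n' → Fin m)
    (i : ℕ) (hi : 1 ≤ i) (hi' : i ≤ n' - 1) :
    (extWord n' (by omega) y (i - 1) = extWord n' (by omega) y i →
      fM m n n' (extWord n' (by omega) y)
        = fM m n i (extWord n' (by omega) y)
            + fM m n (n' - i) (fun k => extWord n' (by omega) y (k + i))
            - (m : ℝ) * n + n + 1)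
    ∧ (extWord n' (by omega) y (i - 1) ≠ extWord n' (by omega) y i →
      (fM m n n' (extWord n' (by omega) y)
          ≤ fM m n i (extWord n' (by omega) y)
              + fM m n (n' - i) (fun k => extWord n' (by omega) y (k + i)))
      ∧ fM m n n' (extWord n' (by omega) y)
          ≥ fM m n i (extWord n' (by omega) y)
              + fM m n (n' - i) (fun k => extWord n' (by omega) y (k + i)) + 1
              - (tailAlt i (extWord n' (by omega) y) : ℝ)
                  * (headAlt (n' - i) (fun k => extWord n' (by omega) y (k + i)) : ℝ)) := by
  obtain ⟨j, rfl⟩ : ∃ j, i = j + 1 := ⟨i - 1, by omega⟩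
  rw [Nat.add_sub_cancel]
  exact fM_split _ n (by omega)
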